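/- arXiv:1107.1523 — 2 statements merged into one kernel-verified Lean document; each statement's English description precedes it below -/
import Mathlib

section
/- Let f : X → X be an invertible piecewise isometry on a compact X ⊂ ℝ^d with topological partition P = {ω_0,…,ω_{r−1}}, let Ω ⊃ X be an open ball, and let f̄ : Ω → Ω be the extension of f by the identity on Ω ∖ X. Suppose η ∈ BV(Ω) vanishes on the δ-neighborhood N_δ of ∂P^∞ for some δ > 0. Then var(η ∘ f̄⁻¹) ≤ var(η) < ∞. -/
open MeasureTheory Set Function Metric Filter Topology

noncomputable section

abbrev Euc (d : ℕ) := EuclideanSpace ℝ (Fin d)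

/-- The full `ℤ`-orbit of `x` under an invertible map `f` of `X`:
`y` belongs to it iff `y ∈ X` and `f^[p] y = f^[q] x` for some `p q : ℕ`
(for a bijection of `X` this is exactly `{f^i(x) : i ∈ ℤ}`). -/
def fullOrbit {α : Type*} (X : Set α) (f : α → α) (x : α) : Set α :=
  {y ∈ X | ∃ p q : ℕ, f^[p] y = f^[q] x}

/-- `x` is a nomadic point of `f : X → X`: its full orbit is dense in `X`. -/
def Nomadic {α : Type*} [TopologicalSpace α] (X : Set α) (f : α → α) (x : α) : Prop :=
  x ∈ X ∧ X ⊆ closure (fullOrbit X f x)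

/-- `A` is a relatively open subset of `X`. -/
def RelOpen {α : Type*} [TopologicalSpace α] (X A : Set α) : Prop :=
  ∃ U, IsOpen U ∧ A = X ∩ U

/-- The interior of `A` relative to the subspace `X`. -/
def RelInterior {α : Type*} [TopologicalSpace α] (X A : Set α) : Set α :=
  {x ∈ X ∩ A | ∃ U, IsOpen U ∧ x ∈ U ∧ X ∩ U ⊆ A}

/-- `f^n(U)` for `n : ℤ`, for an invertible map `f` of `X`. -/
def iterImage {α : Type*} (X : Set α) (f : α → α) (n : ℤ) (U : Set α) : Set α :=
  if 0 ≤ n then f^[n.toNat] '' U else {y ∈ X | f^[(-n).toNat] y ∈ U}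

/-- A topological partition of `X`: pairwise disjoint atoms covering `X`, each with
nonempty interior and Lebesgue-null boundary. -/
def IsTopPartition {d : ℕ} (X : Set (Euc d)) {r : ℕ} (ω : Fin r → Set (Euc d)) : Prop :=
  (Pairwise fun i j => Disjoint (ω i) (ω j)) ∧ (⋃ i, ω i) = X ∧
    (∀ i, (interior (ω i)).Nonempty) ∧ ∀ i, volume (frontier (ω i)) = 0

/-- A piecewise area preserving map with partition `ω`, nonsingular w.r.t. `m`:
measurable, null sets pull back and push forward to null sets, `C¹` on atom
interiors with `|det Df| ≡ 1` there. -/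
def IsPAP {d r : ℕ} (X : Set (Euc d)) (f : Euc d → Euc d) (ω : Fin r → Set (Euc d))
    (m : Measure (Euc d)) : Prop :=
  MapsTo f X X ∧ Measurable f ∧
    (∀ A : Set (Euc d), MeasurableSet A → m A = 0 → m (f ⁻¹' A) = 0 ∧ m (f '' A) = 0) ∧
    (∀ i, ContDiffOn ℝ 1 f (interior (ω i))) ∧
    (∀ i, ∀ x ∈ interior (ω i), |(fderiv ℝ f x).det| = 1)

/-- divergence of a vector field on `ℝ^d`. -/
def divg {d : ℕ} (φ : Euc d → Euc d) (x : Euc d) : ℝ :=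
  ∑ i, fderiv ℝ φ x (EuclideanSpace.single i 1) i

/-- the set of numbers `∫_Ω η · div φ dm` over test vector fields
`φ ∈ C¹_c(Ω, ℝ^d)` with `‖φ‖_∞ ≤ 1`; its supremum is `var(η)`. -/
def varSet {d : ℕ} (Ω : Set (Euc d)) (η : Euc d → ℝ) : Set ℝ :=
  {v | ∃ φ : Euc d → Euc d, ContDiff ℝ 1 φ ∧ HasCompactSupport φ ∧ tsupport φ ⊆ Ω ∧
    (∀ x, ‖φ x‖ ≤ 1) ∧ v = ∫ x in Ω, η x * divg φ x}

/-- `η ∈ BV(Ω)` : integrable on `Ω` with finite variation `var(η) < ∞`. -/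
def IsBVOn {d : ℕ} (Ω : Set (Euc d)) (η : Euc d → ℝ) : Prop :=
  IntegrableOn η Ω volume ∧ BddAbove (varSet Ω η)

/-- the invariant σ-field `I = {B Borel : f⁻¹(B) = B mod m}`. -/
def invariantSigma {α : Type*} [MeasurableSpace α] (f : α → α) (m : Measure α) :
    MeasurableSpace α :=
  MeasurableSpace.generateFrom {B | MeasurableSet B ∧ m (symmDiff B (f ⁻¹' B)) = 0}

/-- interval exchange transformation of `[0,1)`. -/
def IsIET (T : ℝ → ℝ) : Prop :=
  Set.BijOn T (Set.Ico 0 1) (Set.Ico 0 1) ∧ Measurable T ∧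
    ∃ (r : ℕ) (β : Fin (r + 1) → ℝ) (γ : Fin r → ℝ),
      StrictMono β ∧ β 0 = 0 ∧ β (Fin.last r) = 1 ∧
      ∀ i : Fin r, ∀ x ∈ Set.Ico (β i.castSucc) (β i.succ), T x = x + γ i

/-- piecewise rotation of a compact `X ⊆ ℂ` with convex atoms `ω`:
`f(x) = ρ_j x + z_j` on `ω_j`, `|ρ_j| = 1`. -/
def IsPiecewiseRotation {r : ℕ} (X : Set ℂ) (f : ℂ → ℂ) (ω : Fin r → Set ℂ) : Prop :=
  MapsTo f X X ∧ Measurable f ∧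
    (Pairwise fun i j => Disjoint (ω i) (ω j)) ∧ (⋃ i, ω i) = X ∧
    (∀ i, Convex ℝ (ω i)) ∧
    ∃ ρ z : Fin r → ℂ, (∀ i, ‖ρ i‖ = 1) ∧ ∀ i, ∀ x ∈ ω i, f x = ρ i * x + z i

/-- piecewise isometry: on each atom interior, `f` is a Euclidean isometry `x ↦ A x + c`
with `A` orthogonal. -/
def IsPWI {d r : ℕ} (X : Set (Euc d)) (f : Euc d → Euc d) (ω : Fin r → Set (Euc d)) : Prop :=
  MapsTo f X X ∧ Measurable f ∧ IsTopPartition X ω ∧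
    ∀ i, ∃ (A : Euc d ≃ₗᵢ[ℝ] Euc d) (c : Euc d), ∀ x ∈ interior (ω i), f x = A x + c


section AuxStmt13

open scoped RealInnerProductSpace Manifold

lemma divg_congr' {d : ℕ} {φ₁ φ₂ : Euc d → Euc d} {x : Euc d} (h : φ₁ =ᶠ[nhds x] φ₂) :
    divg φ₁ x = divg φ₂ x := by
  unfold divg; rw [h.fderiv_eq]

lemma sum_inner_eq_trace' {d : ℕ} (b : OrthonormalBasis (Fin d) ℝ (Euc d))
    (L : Euc d →L[ℝ] Euc d) :
    ∑ i, ⟪b i, L (b i)⟫ = LinearMap.trace ℝ (Euc d) (L : Euc d →ₗ[ℝ] Euc d) := by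
  rw [LinearMap.trace_eq_matrix_trace ℝ b.toBasis, Matrix.trace]
  refine Finset.sum_congr rfl fun i _ => ?_
  simp [Matrix.diag, LinearMap.toMatrix_apply, OrthonormalBasis.coe_toBasis,
    OrthonormalBasis.coe_toBasis_repr_apply, OrthonormalBasis.repr_apply_apply]

lemma divg_conj' {d : ℕ} (A : Euc d ≃ₗᵢ[ℝ] Euc d) (c : Euc d) {φ : Euc d → Euc d}
    (hφ : ContDiff ℝ 1 φ) (x : Euc d) :
    divg (fun y => A.symm (φ (A y + c))) x = divg φ (A x + c) := by
  set L := fderiv ℝ φ (A x + c) with hL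
  have hA : HasFDerivAt (fun y : Euc d => A y + c)
      (A.toContinuousLinearEquiv : Euc d →L[ℝ] Euc d) x :=
    (A.toContinuousLinearEquiv.hasFDerivAt).add_const c
  have hφ' : HasFDerivAt φ L (A x + c) :=
    ((hφ.differentiable one_ne_zero) (A x + c)).hasFDerivAt
  have h1 : HasFDerivAt (fun y => φ (A y + c))
      (L.comp (A.toContinuousLinearEquiv : Euc d →L[ℝ] Euc d)) x := hφ'.comp x hA
  have h2 : HasFDerivAt (fun y => A.symm (φ (A y + c)))
      ((A.symm.toContinuousLinearEquiv : Euc d →L[ℝ] Euc d).comp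
        (L.comp (A.toContinuousLinearEquiv : Euc d →L[ℝ] Euc d))) x :=
    (A.symm.toContinuousLinearEquiv.hasFDerivAt).comp x h1
  unfold divg
  rw [h2.fderiv, ← hL]
  have hcoord : ∀ (v : Euc d) i, A.symm v i = ⟪A (EuclideanSpace.single i 1), v⟫ := by
    intro v i
    have h3 : ⟪A (EuclideanSpace.single i 1), v⟫
        = ⟪EuclideanSpace.single i 1, A.symm v⟫ := by
      conv_lhs => rw [show v = A (A.symm v) by simp]
      rw [A.inner_map_map]
    rw [h3, EuclideanSpace.inner_single_left]
    simp
  have lhs_eq : ∀ i : Fin d,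
      ((A.symm.toContinuousLinearEquiv : Euc d →L[ℝ] Euc d).comp
        (L.comp (A.toContinuousLinearEquiv : Euc d →L[ℝ] Euc d)))
        (EuclideanSpace.single i 1) i
      = ⟪((EuclideanSpace.basisFun (Fin d) ℝ).map A) i,
          L (((EuclideanSpace.basisFun (Fin d) ℝ).map A) i)⟫ := by
    intro i
    simp only [ContinuousLinearMap.coe_comp', Function.comp_apply,
      ContinuousLinearEquiv.coe_coe, LinearIsometryEquiv.coe_toContinuousLinearEquiv,
      OrthonormalBasis.map_apply, EuclideanSpace.basisFun_apply]
    rw [hcoord]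
  have rhs_eq : ∀ i : Fin d, L (EuclideanSpace.single i 1) i
      = ⟪(EuclideanSpace.basisFun (Fin d) ℝ) i, L ((EuclideanSpace.basisFun (Fin d) ℝ) i)⟫ := by
    intro i
    rw [EuclideanSpace.basisFun_apply, EuclideanSpace.inner_single_left]
    simp
  calc ∑ i, ((A.symm.toContinuousLinearEquiv : Euc d →L[ℝ] Euc d).comp
        (L.comp (A.toContinuousLinearEquiv : Euc d →L[ℝ] Euc d)))
        (EuclideanSpace.single i 1) i
      = ∑ i, ⟪((EuclideanSpace.basisFun (Fin d) ℝ).map A) i,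
          L (((EuclideanSpace.basisFun (Fin d) ℝ).map A) i)⟫ :=
        Finset.sum_congr rfl fun i _ => lhs_eq i
    _ = LinearMap.trace ℝ (Euc d) (L : Euc d →ₗ[ℝ] Euc d) := sum_inner_eq_trace' _ L
    _ = ∑ i, ⟪(EuclideanSpace.basisFun (Fin d) ℝ) i, L ((EuclideanSpace.basisFun (Fin d) ℝ) i)⟫ :=
        (sum_inner_eq_trace' _ L).symm
    _ = ∑ i, L (EuclideanSpace.single i 1) i :=
        Finset.sum_congr rfl fun i _ => (rhs_eq i).symm

lemma exists_cutoff' {d : ℕ} {s t : Set (Euc d)} (hs : IsClosed s) (ht : IsClosed t)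
    (hd : Disjoint s t) :
    ∃ χ : Euc d → ℝ, ContDiff ℝ 1 χ ∧ Set.EqOn χ 0 s ∧ Set.EqOn χ 1 t ∧
      ∀ x, χ x ∈ Set.Icc (0:ℝ) 1 := by
  obtain ⟨F, h0, h1, hI⟩ := exists_contMDiffMap_zero_one_of_isClosed (n := ⊤) (𝓘(ℝ, Euc d)) hs ht hd
  exact ⟨F, (contMDiff_iff_contDiff.mp F.contMDiff).of_le (by exact_mod_cast le_top), h0, h1, hI⟩

lemma zero_mem_varSet' {d : ℕ} (Ω : Set (Euc d)) (η : Euc d → ℝ) :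
    (0:ℝ) ∈ varSet Ω η := by
  refine ⟨fun _ => 0, contDiff_const, ?_, ?_, ?_, ?_⟩
  · have h : tsupport (fun _ : Euc d => (0 : Euc d)) = ∅ := by simp [tsupport]
    rw [HasCompactSupport, h]; exact isCompact_empty
  · have h : tsupport (fun _ : Euc d => (0 : Euc d)) = ∅ := by simp [tsupport]
    rw [h]; exact Set.empty_subset _
  · intro x; simp
  · simp [divg]

end AuxStmt13


/-- for an invertible PWI `f` extended by the identity to `f̄ : Ω → Ω`, if
`η ∈ BV(Ω)` vanishes on the `δ`-neighborhood of `∂P^∞`, then `var(η ∘ f̄⁻¹) ≤ var(η) < ∞`. -/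
theorem stmt13 {d r : ℕ} (X : Set (Euc d)) (hXc : IsCompact X)
    (f : Euc d → Euc d) (ω : Fin r → Set (Euc d))
    (hPWI : IsPWI X f ω) (hbij : Set.BijOn f X X)
    (Ω : Set (Euc d)) (c : Euc d) (R : ℝ) (hR : 0 < R) (hΩ : Ω = Metric.ball c R)
    (hXΩ : X ⊆ Ω)
    (fbar : Euc d → Euc d)
    (hfbar : (∀ x ∈ X, fbar x = f x) ∧ ∀ x ∉ X, fbar x = x)
    (g : Euc d → Euc d) (hg : ∀ x ∈ Ω, g (fbar x) = x ∧ fbar (g x) = x)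
    (η : Euc d → ℝ) (hηBV : IsBVOn Ω η)
    (δ : ℝ) (hδ : 0 < δ)
    (hvanish : ∀ x ∈ Ω ∩ Metric.thickening δ
      {y ∈ Ω | ∃ n : ℕ, fbar^[n] y ∈ (⋃ i, frontier (ω i)) ∪ frontier (Ω \ X)},
      η x = 0) :
    IsBVOn Ω (η ∘ g) ∧ sSup (varSet Ω (η ∘ g)) ≤ sSup (varSet Ω η) := by
  classical
  obtain ⟨hmaps, hfmeas, ⟨hdisj, hcover, hintne, hfrnull⟩, hiso⟩ := hPWI
  choose A cc hAc using hiso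
  have hXclosed : IsClosed X := hXc.isClosed
  have hXmeas : MeasurableSet X := hXclosed.measurableSet
  have hΩopen : IsOpen Ω := hΩ ▸ isOpen_ball
  have hΩmeas : MeasurableSet Ω := hΩopen.measurableSet
  -- global description of `fbar`
  have hfbar_eq : fbar = fun x => if x ∈ X then f x else x := by
    funext x
    by_cases h : x ∈ X
    · rw [if_pos h]; exact hfbar.1 x h
    · rw [if_neg h]; exact hfbar.2 x h
  have hfbm : Measurable fbar := by
    rw [hfbar_eq]; exact Measurable.ite hXmeas hfmeas measurable_id
  have hfbinj : Function.Injective fbar := by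
    intro x y hxy
    by_cases hx : x ∈ X <;> by_cases hy : y ∈ X
    · rw [hfbar.1 x hx, hfbar.1 y hy] at hxy; exact hbij.injOn hx hy hxy
    · rw [hfbar.1 x hx, hfbar.2 y hy] at hxy
      exact absurd (hxy ▸ hbij.mapsTo hx) hy
    · rw [hfbar.2 x hx, hfbar.1 y hy] at hxy
      exact absurd (hxy ▸ hbij.mapsTo hy) hx
    · rwa [hfbar.2 x hx, hfbar.2 y hy] at hxy
  have hemb : MeasurableEmbedding fbar := hfbm.measurableEmbedding hfbinj
  set P0 : Set (Euc d) := Ω \ X with hP0def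
  have hP0open : IsOpen P0 := hΩopen.sdiff hXclosed
  have hsubX : ∀ i, interior (ω i) ⊆ X := fun i =>
    interior_subset.trans (by rw [← hcover]; exact subset_iUnion ω i)
  have hfbar_on_pi : ∀ i, ∀ x ∈ interior (ω i), fbar x = A i x + cc i :=
    fun i x hx => (hfbar.1 x (hsubX i hx)).trans (hAc i x hx)
  -- the affine isometries are measure preserving
  have hmpT : ∀ i, MeasurePreserving (fun x : Euc d => A i x + cc i) volume volume :=
    fun i => (measurePreserving_add_right volume (cc i)).comp (A i).measurePreserving
  have hmpS : ∀ i, MeasurePreserving (fun y : Euc d => (A i).symm (y - cc i)) volume volume := by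
    intro i
    have h2 : (fun y : Euc d => (A i).symm (y - cc i))
        = ⇑(A i).symm ∘ fun x : Euc d => x + -cc i := by
      funext y; simp [sub_eq_add_neg]
    rw [h2]
    exact (A i).symm.measurePreserving.comp (measurePreserving_add_right volume (-cc i))
  have himg : ∀ i (s : Set (Euc d)),
      (fun x : Euc d => A i x + cc i) '' s = (fun y : Euc d => (A i).symm (y - cc i)) ⁻¹' s := by
    intro i s
    ext y
    constructor
    · rintro ⟨x, hx, rfl⟩; simpa using hx
    · intro hy; exact ⟨(A i).symm (y - cc i), hy, by simp⟩
  have hvol_img : ∀ i (s : Set (Euc d)), MeasurableSet s →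
      volume ((fun x : Euc d => A i x + cc i) '' s) = volume s := by
    intro i s hs
    rw [himg]
    exact (hmpS i).measure_preimage hs.nullMeasurableSet
  set E : Fin r → Set (Euc d) := fun i => (fun x : Euc d => A i x + cc i) '' interior (ω i)
    with hEdef
  have hEopen : ∀ i, IsOpen (E i) := by
    intro i
    rw [hEdef]
    simp only
    rw [himg]
    exact isOpen_interior.preimage ((A i).symm.continuous.comp (continuous_id.sub continuous_const))
  have hEmeas : ∀ i, MeasurableSet (E i) := fun i => (hEopen i).measurableSet
  have hfimg : ∀ i, f '' interior (ω i) = E i := fun i => Set.image_congr (hAc i)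
  have hEX : ∀ i, E i ⊆ X := by
    intro i
    rw [← hfimg]
    exact (Set.image_mono (f := f) (hsubX i)).trans hbij.mapsTo.image_subset
  have hEdisj : Pairwise fun i j => Disjoint (E i) (E j) := by
    intro i j hij
    rw [Set.disjoint_iff_inter_eq_empty, ← hfimg, ← hfimg,
      ← hbij.injOn.image_inter (hsubX i) (hsubX j),
      Set.disjoint_iff_inter_eq_empty.mp ((hdisj hij).mono interior_subset interior_subset),
      Set.image_empty]
  have hvolE : ∀ i, volume (E i) = volume (interior (ω i)) :=
    fun i => hvol_img i _ isOpen_interior.measurableSet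
  have hNP : volume (X \ ⋃ i, interior (ω i)) = 0 := by
    refine measure_mono_null ?_ (measure_iUnion_null fun i => hfrnull i)
    rintro x ⟨hxX, hxni⟩
    have hx' : x ∈ ⋃ i, ω i := by rw [hcover]; exact hxX
    obtain ⟨i, hi⟩ := mem_iUnion.mp hx'
    exact mem_iUnion.mpr ⟨i, subset_closure hi, fun hint => hxni (mem_iUnion.mpr ⟨i, hint⟩)⟩
  have hXfin : volume X ≠ ⊤ := hXc.measure_lt_top.ne
  have hPdisj : Pairwise (Function.onFun Disjoint fun i => interior (ω i)) :=
    fun i j hij => (hdisj hij).mono interior_subset interior_subset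
  have hvolPU : volume (⋃ i, interior (ω i)) = volume X := by
    apply le_antisymm (measure_mono (iUnion_subset hsubX))
    calc volume X ≤ volume ((⋃ i, interior (ω i)) ∪ (X \ ⋃ i, interior (ω i))) :=
          measure_mono (fun x hx => by
            by_cases h : x ∈ ⋃ i, interior (ω i)
            exacts [Or.inl h, Or.inr ⟨hx, h⟩])
      _ ≤ volume (⋃ i, interior (ω i)) + volume (X \ ⋃ i, interior (ω i)) := measure_union_le _ _
      _ = volume (⋃ i, interior (ω i)) := by rw [hNP, add_zero]
  have hNE : volume (X \ ⋃ i, E i) = 0 := by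
    have hEU : volume (⋃ i, E i) = volume X := by
      calc volume (⋃ i, E i) = ∑' i, volume (E i) := measure_iUnion hEdisj hEmeas
        _ = ∑' i, volume (interior (ω i)) := tsum_congr fun i => hvolE i
        _ = volume (⋃ i, interior (ω i)) :=
            (measure_iUnion hPdisj fun i => isOpen_interior.measurableSet).symm
        _ = volume X := hvolPU
    rw [measure_diff (iUnion_subset hEX) (MeasurableSet.iUnion hEmeas).nullMeasurableSet
      (by rw [hEU]; exact hXfin), hEU, tsub_self]
  -- decomposition of measures of subsets of `Ω`
  have key : ∀ B : Set (Euc d), MeasurableSet B → ∀ Q : Fin r → Set (Euc d),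
      (∀ i, MeasurableSet (Q i)) → (∀ i, Q i ⊆ X) →
      (Pairwise fun i j => Disjoint (Q i) (Q j)) → volume (X \ ⋃ i, Q i) = 0 →
      volume (B ∩ Ω) = volume (B ∩ P0) + ∑ i, volume (B ∩ Q i) := by
    intro B hB Q hQm hQX hQd hQn
    have hdisj0 : Disjoint (B ∩ P0) (⋃ i, B ∩ Q i) :=
      Disjoint.mono inter_subset_right
        (iUnion_subset fun i => inter_subset_right.trans (hQX i))
        Set.disjoint_sdiff_left
    have hU : volume ((B ∩ P0) ∪ ⋃ i, B ∩ Q i) = volume (B ∩ P0) + ∑ i, volume (B ∩ Q i) := by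
      rw [measure_union hdisj0 (MeasurableSet.iUnion fun i => hB.inter (hQm i)),
        measure_iUnion (fun i j hij => (hQd hij).mono inter_subset_right inter_subset_right)
          (fun i => hB.inter (hQm i)), tsum_fintype]
    apply le_antisymm
    · have hsub2 : B ∩ Ω ⊆ ((B ∩ P0) ∪ ⋃ i, B ∩ Q i) ∪ (X \ ⋃ i, Q i) := by
        rintro x ⟨hxB, hxΩ⟩
        by_cases hxX : x ∈ X
        · by_cases hxQ : x ∈ ⋃ i, Q i
          · obtain ⟨i, hi⟩ := mem_iUnion.mp hxQ
            exact Or.inl (Or.inr (mem_iUnion.mpr ⟨i, hxB, hi⟩))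
          · exact Or.inr ⟨hxX, hxQ⟩
        · exact Or.inl (Or.inl ⟨hxB, hxΩ, hxX⟩)
      calc volume (B ∩ Ω) ≤ volume (((B ∩ P0) ∪ ⋃ i, B ∩ Q i) ∪ (X \ ⋃ i, Q i)) :=
            measure_mono hsub2
        _ ≤ volume ((B ∩ P0) ∪ ⋃ i, B ∩ Q i) + volume (X \ ⋃ i, Q i) := measure_union_le _ _
        _ = volume (B ∩ P0) + ∑ i, volume (B ∩ Q i) := by rw [hQn, add_zero, hU]
    · rw [← hU]
      exact measure_mono (union_subset (fun x hx => ⟨hx.1, hx.2.1⟩)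
        (iUnion_subset fun i x hx => ⟨hx.1, hXΩ (hQX i hx.2)⟩))
  have hTinj : ∀ i, Function.Injective (fun x : Euc d => A i x + cc i) := by
    intro i x y hxy
    simp only at hxy
    exact (A i).injective (add_right_cancel hxy)
  -- `fbar` preserves the restricted volume
  have hmap : Measure.map fbar (volume.restrict Ω) = volume.restrict Ω := by
    refine Measure.ext fun B hB => ?_
    rw [Measure.map_apply hfbm hB, Measure.restrict_apply (hfbm hB), Measure.restrict_apply hB]
    have hL0 : fbar ⁻¹' B ∩ P0 = B ∩ P0 := by
      ext x
      simp only [mem_inter_iff, mem_preimage]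
      constructor
      · rintro ⟨h1, h2⟩; rw [hfbar.2 x h2.2] at h1; exact ⟨h1, h2⟩
      · rintro ⟨h1, h2⟩; rw [hfbar.2 x h2.2]; exact ⟨h1, h2⟩
    have hLi : ∀ i, fbar ⁻¹' B ∩ interior (ω i)
        = (fun x : Euc d => A i x + cc i) ⁻¹' (B ∩ E i) := by
      intro i
      ext x
      simp only [mem_inter_iff, mem_preimage]
      constructor
      · rintro ⟨h1, h2⟩
        rw [hfbar_on_pi i x h2] at h1
        exact ⟨h1, mem_image_of_mem _ h2⟩
      · rintro ⟨h1, h2⟩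
        obtain ⟨y, hy, hyx⟩ := h2
        have hxy : y = x := hTinj i hyx
        subst hxy
        rw [hfbar_on_pi i y hy]
        exact ⟨h1, hy⟩
    rw [key (fbar ⁻¹' B) (hfbm hB) (fun i => interior (ω i))
        (fun i => isOpen_interior.measurableSet) hsubX
        (fun i j hij => (hdisj hij).mono interior_subset interior_subset) hNP,
      key B hB E hEmeas hEX hEdisj hNE, hL0]
    congr 1
    refine Finset.sum_congr rfl fun i _ => ?_
    rw [hLi i]
    exact (hmpT i).measure_preimage (hB.inter (hEmeas i)).nullMeasurableSet
  have hgf : ∀ x ∈ Ω, g (fbar x) = x := fun x hx => (hg x hx).1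
  have hcomp_ae : (fun x => (η ∘ g) (fbar x)) =ᵐ[volume.restrict Ω] η := by
    filter_upwards [ae_restrict_mem hΩmeas] with x hx
    simp only [Function.comp_apply]
    rw [hgf x hx]
  have hint : IntegrableOn (η ∘ g) Ω volume := by
    have h1 : Integrable ((η ∘ g) ∘ fbar) (volume.restrict Ω) := hηBV.1.congr hcomp_ae.symm
    have h2 : Integrable (η ∘ g) (Measure.map fbar (volume.restrict Ω)) :=
      hemb.integrable_map_iff.mpr h1
    rwa [hmap] at h2
  -- the inclusion of variation sets
  have hsubvar : varSet Ω (η ∘ g) ⊆ varSet Ω η := by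
    rintro v ⟨φ, hφ1, hφc, hφΩ, hφn, rfl⟩
    set D := {y ∈ Ω | ∃ n : ℕ, fbar^[n] y ∈ (⋃ i, frontier (ω i)) ∪ frontier (Ω \ X)} with hDdef
    have hmemD : ∀ x ∈ Ω, x ∈ (⋃ i, frontier (ω i)) ∪ frontier (Ω \ X) → x ∈ D :=
      fun x hx h => ⟨hx, 0, by simpa using h⟩
    have hηz : ∀ x ∈ Ω, x ∈ Metric.thickening δ D → η x = 0 := fun x hx h => hvanish x ⟨hx, h⟩
    obtain ⟨χ, hχsm, hχ0, hχ1, hχI⟩ := exists_cutoff'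
      (Metric.isClosed_cthickening (δ := δ/2) (E := D))
      (Metric.isOpen_thickening (δ := 3*(δ/4)) (E := D)).isClosed_compl
      (Set.disjoint_left.mpr fun x hx hxc =>
        hxc (Metric.cthickening_subset_thickening' (by linarith) (by linarith) D hx))
    -- the piecewise pulled-back vector field
    obtain ⟨Ψ, hΨP0, hΨPi, hΨzero, hΨnorm⟩ :
        ∃ Ψ : Euc d → Euc d,
          (∀ x ∈ P0, Ψ x = φ x) ∧
          (∀ i, ∀ x ∈ interior (ω i), Ψ x = (A i).symm (φ (A i x + cc i))) ∧
          (∀ x, x ∉ X → x ∉ tsupport φ → Ψ x = 0) ∧ (∀ x, ‖Ψ x‖ ≤ 1) := by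
      refine ⟨fun x => if x ∈ P0 then φ x else
        if h : ∃ i, x ∈ interior (ω i) then
          (A h.choose).symm (φ (A h.choose x + cc h.choose)) else 0, ?_, ?_, ?_, ?_⟩
      · intro x hx; dsimp only; rw [if_pos hx]
      · intro i x hx
        dsimp only
        have hxX : x ∈ X := hsubX i hx
        have hnot : x ∉ P0 := fun h => h.2 hxX
        have hex : ∃ j, x ∈ interior (ω j) := ⟨i, hx⟩
        have hch : hex.choose = i := by
          by_contra hne
          exact Set.disjoint_left.mp (hdisj hne) (interior_subset hex.choose_spec)
            (interior_subset hx)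
        rw [if_neg hnot, dif_pos hex, hch]
      · intro x hxX hxts
        dsimp only
        by_cases h0 : x ∈ P0
        · rw [if_pos h0]; exact image_eq_zero_of_notMem_tsupport hxts
        · rw [if_neg h0, dif_neg fun h => hxX (hsubX h.choose h.choose_spec)]
      · intro x
        dsimp only
        by_cases h0 : x ∈ P0
        · rw [if_pos h0]; exact hφn x
        · rw [if_neg h0]
          by_cases hex : ∃ j, x ∈ interior (ω j)
          · rw [dif_pos hex, LinearIsometryEquiv.norm_map]; exact hφn _
          · rw [dif_neg hex]; simp
    set ψ : Euc d → Euc d := fun x => χ x • Ψ x with hψdef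
    have hψsm : ContDiff ℝ 1 ψ := by
      rw [contDiff_iff_contDiffAt]
      intro x
      by_cases hnear : x ∈ Metric.thickening (δ/2) D
      · have hev : ψ =ᶠ[nhds x] fun _ => 0 := by
          filter_upwards [Metric.isOpen_thickening.mem_nhds hnear] with y hy
          have h0 : χ y = 0 := hχ0 (Metric.thickening_subset_cthickening _ _ hy)
          simp [hψdef, h0]
        exact contDiffAt_const.congr_of_eventuallyEq hev
      · by_cases hxΩ : x ∈ Ω
        · by_cases hxX : x ∈ X
          · have hxD : x ∉ D := fun h => hnear (Metric.self_subset_thickening (by linarith) _ h)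
            have hx' : x ∈ ⋃ i, ω i := by rw [hcover]; exact hxX
            obtain ⟨i, hi⟩ := mem_iUnion.mp hx'
            have hxint : x ∈ interior (ω i) := by
              by_contra h
              exact hxD (hmemD x hxΩ (Or.inl (mem_iUnion.mpr ⟨i, subset_closure hi, h⟩)))
            have hev : ψ =ᶠ[nhds x] fun y => χ y • (A i).symm (φ (A i y + cc i)) := by
              filter_upwards [isOpen_interior.mem_nhds hxint] with y hy
              simp only [hψdef]
              rw [hΨPi i y hy]
            have hTc : ContDiff ℝ 1 fun y : Euc d => A i y + cc i := by
              have h1 : ContDiff ℝ 1 fun y : Euc d => A i y :=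
                ((A i).toContinuousLinearEquiv : Euc d →L[ℝ] Euc d).contDiff
              exact h1.add contDiff_const
            have hInner : ContDiff ℝ 1 fun y : Euc d => (A i).symm (φ (A i y + cc i)) := by
              have h2 : ContDiff ℝ 1 fun z : Euc d => (A i).symm z :=
                ((A i).symm.toContinuousLinearEquiv : Euc d →L[ℝ] Euc d).contDiff
              exact h2.comp (hφ1.comp hTc)
            exact ((hχsm.smul hInner).contDiffAt).congr_of_eventuallyEq hev
          · have hev : ψ =ᶠ[nhds x] fun y => χ y • φ y := by
              filter_upwards [hP0open.mem_nhds ⟨hxΩ, hxX⟩] with y hy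
              simp only [hψdef]
              rw [hΨP0 y hy]
            exact ((hχsm.smul hφ1).contDiffAt).congr_of_eventuallyEq hev
        · have hO : IsOpen ((tsupport φ)ᶜ ∩ Xᶜ) :=
            (isClosed_tsupport φ).isOpen_compl.inter hXclosed.isOpen_compl
          have hev : ψ =ᶠ[nhds x] fun _ => 0 := by
            filter_upwards [hO.mem_nhds ⟨fun h => hxΩ (hφΩ h), fun h => hxΩ (hXΩ h)⟩]
              with y hy
            simp [hψdef, hΨzero y hy.2 hy.1]
          exact contDiffAt_const.congr_of_eventuallyEq hev
    have hψsupp : tsupport ψ ⊆ tsupport φ ∪ X := by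
      refine closure_minimal ?_ ((isClosed_tsupport φ).union hXclosed)
      intro x hx
      by_contra hnx
      simp only [mem_union, not_or] at hnx
      rw [Function.mem_support] at hx
      apply hx
      simp [hψdef, hΨzero x hnx.2 hnx.1]
    have hψcs : HasCompactSupport ψ :=
      IsCompact.of_isClosed_subset (hφc.union hXc) isClosed_closure hψsupp
    have hψΩ : tsupport ψ ⊆ Ω := hψsupp.trans (union_subset hφΩ hXΩ)
    have hψn : ∀ x, ‖ψ x‖ ≤ 1 := by
      intro x
      have h1 : ‖ψ x‖ = |χ x| * ‖Ψ x‖ := by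
        simp only [hψdef]; rw [norm_smul, Real.norm_eq_abs]
      rw [h1]
      have h2 : |χ x| ≤ 1 := abs_le.mpr ⟨by linarith [(hχI x).1], (hχI x).2⟩
      calc |χ x| * ‖Ψ x‖ ≤ 1 * 1 :=
            mul_le_mul h2 (hΨnorm x) (norm_nonneg _) zero_le_one
        _ = 1 := mul_one 1
    have hdiv : ∀ x ∈ Ω, η x * divg φ (fbar x) = η x * divg ψ x := by
      intro x hxΩ
      by_cases hx0 : η x = 0
      · rw [hx0]; ring
      · have hfar : x ∉ Metric.thickening δ D := fun h => hx0 (hηz x hxΩ h)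
        rw [Metric.mem_thickening_iff_infEdist_lt, not_lt] at hfar
        have hball1 : ∀ y ∈ Metric.ball x (δ/4), χ y = 1 := by
          intro y hy
          apply hχ1
          intro hmem
          rw [Metric.mem_thickening_iff_infEdist_lt] at hmem
          have hxy : edist x y < ENNReal.ofReal (δ/4) := by
            rw [edist_dist, dist_comm]
            exact (ENNReal.ofReal_lt_ofReal_iff (by linarith)).mpr (Metric.mem_ball.mp hy)
          have hlt : EMetric.infEdist x D < ENNReal.ofReal (3*(δ/4)) + ENNReal.ofReal (δ/4) :=
            lt_of_le_of_lt EMetric.infEdist_le_infEdist_add_edist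
              (ENNReal.add_lt_add hmem hxy)
          rw [← ENNReal.ofReal_add (by linarith) (by linarith)] at hlt
          have h34 : 3*(δ/4) + δ/4 = δ := by ring
          rw [h34] at hlt
          exact absurd hfar (not_le.mpr hlt)
        have hxD : x ∉ D := by
          intro h
          have h0 : Metric.infEDist x D = 0 := Metric.infEDist_zero_of_mem h
          rw [h0] at hfar
          exact absurd (le_antisymm hfar zero_le) (by simp [ENNReal.ofReal_eq_zero]; linarith)
        by_cases hxX : x ∈ X
        · have hx' : x ∈ ⋃ i, ω i := by rw [hcover]; exact hxX
          obtain ⟨i, hi⟩ := mem_iUnion.mp hx'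
          have hxint : x ∈ interior (ω i) := by
            by_contra h
            exact hxD (hmemD x hxΩ (Or.inl (mem_iUnion.mpr ⟨i, subset_closure hi, h⟩)))
          have hev : ψ =ᶠ[nhds x] fun y => (A i).symm (φ (A i y + cc i)) := by
            have hob : IsOpen (Metric.ball x (δ/4)) := Metric.isOpen_ball
            filter_upwards [(isOpen_interior.inter hob).mem_nhds
              ⟨hxint, Metric.mem_ball_self (by linarith : (0:ℝ) < δ/4)⟩] with y hy
            simp only [hψdef]
            rw [hΨPi i y hy.1, hball1 y hy.2, one_smul]
          rw [divg_congr' hev, divg_conj' (A i) (cc i) hφ1 x, hfbar_on_pi i x hxint]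
        · have hfx : fbar x = x := hfbar.2 x hxX
          have hev : ψ =ᶠ[nhds x] φ := by
            have hob : IsOpen (Metric.ball x (δ/4)) := Metric.isOpen_ball
            filter_upwards [(hP0open.inter hob).mem_nhds
              ⟨⟨hxΩ, hxX⟩, Metric.mem_ball_self (by linarith : (0:ℝ) < δ/4)⟩] with y hy
            simp only [hψdef]
            rw [hΨP0 y hy.1, hball1 y hy.2, one_smul]
          rw [divg_congr' hev, hfx]
    refine ⟨ψ, hψsm, hψcs, hψΩ, hψn, ?_⟩
    have e1 : (∫ x in Ω, (η ∘ g) x * divg φ x)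
        = ∫ y, (η ∘ g) y * divg φ y ∂(Measure.map fbar (volume.restrict Ω)) := by
      rw [hmap]
    have e2 : (∫ y, (η ∘ g) y * divg φ y ∂(Measure.map fbar (volume.restrict Ω)))
        = ∫ x, (η ∘ g) (fbar x) * divg φ (fbar x) ∂(volume.restrict Ω) :=
      hemb.integral_map _
    have e3 : (∫ x, (η ∘ g) (fbar x) * divg φ (fbar x) ∂(volume.restrict Ω))
        = ∫ x, η x * divg φ (fbar x) ∂(volume.restrict Ω) := by
      refine integral_congr_ae ?_
      filter_upwards [ae_restrict_mem hΩmeas] with x hx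
      simp only [Function.comp_apply]
      rw [hgf x hx]
    have e4 : (∫ x, η x * divg φ (fbar x) ∂(volume.restrict Ω))
        = ∫ x, η x * divg ψ x ∂(volume.restrict Ω) := by
      refine integral_congr_ae ?_
      filter_upwards [ae_restrict_mem hΩmeas] with x hx
      exact hdiv x hx
    exact (e1.trans (e2.trans (e3.trans e4)))
  constructor
  · exact ⟨hint, BddAbove.mono hsubvar hηBV.2⟩
  · exact csSup_le_csSup hηBV.2 ⟨0, zero_mem_varSet' Ω (η ∘ g)⟩ hsubvar
end
end

section
/- Let X ⊂ ℝ^d be compact and f : X → X a piecewise invertible area preserving map with topological partition P = {ω_0,…,ω_{r−1}} such that f restricted to the interior of each ω_i is bi-Lipschitz, and let X⁺ := ∩_{i=0}^∞ f^i(X). Then there exists a map g : closure(X⁺) → closure(X⁺) such that g(x) = f(x) for every x ∈ int(ω_i) ∩ X⁺ (for each i), g is nonsingular with respect to m (m(A) = 0 implies m(g⁻¹(A)) = m(g(A)) = 0 for Borel A ⊆ closure(X⁺)), and g is m-almost everywhere invertible, i.e., injective outside an m-null subset of closure(X⁺). -/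
open MeasureTheory Set Function Metric Filter Topology

noncomputable section

/-- Auxiliary iterated-image sequence used in the proof of `stmt19`. -/
def Eseq19 {d : ℕ} (X : Set (Euc d)) (f : Euc d → Euc d) {r : ℕ}
    (ω : Fin r → Set (Euc d)) : ℕ → Set (Euc d) :=
  fun n => Nat.rec X (fun _ En => ⋃ i, f '' (En ∩ interior (ω i))) n

/-- for a piecewise invertible PAP, bi-Lipschitz on atom interiors, there
is a map `g : closure(X⁺) → closure(X⁺)` agreeing with `f` on `int(ω_i) ∩ X⁺`, which is
nonsingular w.r.t. `m` and m-a.e. invertible on `closure(X⁺)`. -/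
theorem stmt19 {d r : ℕ} (X : Set (Euc d)) (hXc : IsCompact X)
    (f : Euc d → Euc d) (ω : Fin r → Set (Euc d))
    (m : Measure (Euc d)) (hm : m = (volume X)⁻¹ • volume.restrict X)
    (hpart : IsTopPartition X ω) (hPAP : IsPAP X f ω m)
    (hinj : ∀ i, InjOn f (ω i))
    (hbilip : ∀ i, ∃ K K' : NNReal, LipschitzOnWith K f (interior (ω i)) ∧
      ∀ x ∈ interior (ω i), ∀ y ∈ interior (ω i), dist x y ≤ K' * dist (f x) (f y)) :
    ∃ g : Euc d → Euc d,
      MapsTo g (closure (⋂ n : ℕ, f^[n] '' X)) (closure (⋂ n : ℕ, f^[n] '' X)) ∧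
      (∀ i, ∀ x ∈ interior (ω i) ∩ ⋂ n : ℕ, f^[n] '' X, g x = f x) ∧
      (∀ A : Set (Euc d), A ⊆ closure (⋂ n : ℕ, f^[n] '' X) → MeasurableSet A →
        m A = 0 → m (g ⁻¹' A ∩ closure (⋂ n : ℕ, f^[n] '' X)) = 0 ∧ m (g '' A) = 0) ∧
      ∃ N ⊆ closure (⋂ n : ℕ, f^[n] '' X), m N = 0 ∧
        InjOn g (closure (⋂ n : ℕ, f^[n] '' X) \ N) := by
  classical
  obtain ⟨hmaps, hmeas, hns, hcd, hdet⟩ := hPAP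
  obtain ⟨hdisj, hcover, -, hfr⟩ := hpart
  set P : Set (Euc d) := ⋂ n : ℕ, f^[n] '' X with hPdef
  set C : Set (Euc d) := closure P with hCdef
  set U : Set (Euc d) := ⋃ i, interior (ω i) with hUdef
  set S : Set (Euc d) := U ∩ P with hSdef
  set F : Set (Euc d) := ⋃ i, frontier (ω i) with hFdef
  have hXmeas : MeasurableSet X := hXc.measurableSet
  have hmA : ∀ A : Set (Euc d), m A = (volume X)⁻¹ * volume (A ∩ X) := by
    intro A
    rw [hm, Measure.smul_apply, Measure.restrict_apply' hXmeas, smul_eq_mul]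
  have hmsub : ∀ A : Set (Euc d), A ⊆ X → m A = (volume X)⁻¹ * volume A := by
    intro A hA; rw [hmA, inter_eq_self_of_subset_left hA]
  have hωX : ∀ i, ω i ⊆ X := by
    intro i; rw [← hcover]; exact subset_iUnion ω i
  have hintX : ∀ i, interior (ω i) ⊆ X := fun i => interior_subset.trans (hωX i)
  have hFmeas : MeasurableSet F := MeasurableSet.iUnion fun i => isClosed_frontier.measurableSet
  have hF0 : m F = 0 := by
    have hv : volume F = 0 := measure_iUnion_null fun i => hfr i
    rw [hmA]
    have hvx : volume (F ∩ X) = 0 := measure_mono_null inter_subset_left hv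
    rw [hvx, mul_zero]
  have hXU : X \ U ⊆ F := by
    intro x hx
    obtain ⟨i, hi⟩ : ∃ i, x ∈ ω i := by
      have hx1 := hx.1; rw [← hcover] at hx1; exact mem_iUnion.1 hx1
    have hxint : x ∉ interior (ω i) := fun h => hx.2 (mem_iUnion.2 ⟨i, h⟩)
    exact mem_iUnion.2 ⟨i, ⟨subset_closure hi, hxint⟩⟩
  have hiter : ∀ n : ℕ, f^[n+1] '' X = f '' (f^[n] '' X) := by
    intro n; rw [Function.iterate_succ', Set.image_comp]
  have hPX : P ⊆ X := fun x hx => by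
    have hx0 := mem_iInter.1 hx 0; simpa using hx0
  have hCX : C ⊆ X := closure_minimal hPX hXc.isClosed
  have hfP : MapsTo f P P := by
    intro x hx
    have hx' := mem_iInter.1 hx
    refine mem_iInter.2 fun n => ?_
    cases n with
    | zero => simpa using hmaps (hPX hx)
    | succ k => rw [hiter k]; exact mem_image_of_mem f (hx' k)
  have himg : ∀ i (B : Set (Euc d)), MeasurableSet B → B ⊆ ω i → MeasurableSet (f '' B) := by
    intro i B hB hBi
    exact hB.image_of_measurable_injOn hmeas ((hinj i).mono hBi)
  have hcov : ∀ i (B : Set (Euc d)), MeasurableSet B → B ⊆ interior (ω i) →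
      m (f '' B) = m B := by
    intro i B hB hBi
    have hder : ∀ x ∈ B, HasFDerivWithinAt f (fderiv ℝ f x) B x := by
      intro x hx
      have hxo : interior (ω i) ∈ 𝓝 x := isOpen_interior.mem_nhds (hBi hx)
      exact (((hcd i).differentiableOn one_ne_zero x (hBi hx)).differentiableAt
        hxo).hasFDerivAt.hasFDerivWithinAt
    have h1 : (∫⁻ x in B, ENNReal.ofReal |(fderiv ℝ f x).det| ∂volume) = volume (f '' B) :=
      lintegral_abs_det_fderiv_eq_addHaar_image volume hB hder
        ((hinj i).mono (hBi.trans interior_subset))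
    have h2 : (∫⁻ x in B, ENNReal.ofReal |(fderiv ℝ f x).det| ∂volume)
        = ∫⁻ _ in B, 1 ∂volume := by
      refine setLIntegral_congr_fun hB (fun x hx => ?_)
      rw [hdet i x (hBi hx)]; simp
    have hvol : volume (f '' B) = volume B := by
      rw [← h1, h2, setLIntegral_one]
    have hBX : B ⊆ X := hBi.trans (hintX i)
    have hfBX : f '' B ⊆ X := by
      rintro y ⟨x, hx, rfl⟩; exact hmaps (hBX hx)
    rw [hmsub _ hfBX, hmsub _ hBX, hvol]
  set E : ℕ → Set (Euc d) := Eseq19 X f ω with hEdef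
  have hE0 : E 0 = X := rfl
  have hEsucc : ∀ n, E (n+1) = ⋃ i, f '' (E n ∩ interior (ω i)) := fun n => rfl
  have hEX : ∀ n, E n ⊆ X := by
    intro n
    induction n with
    | zero => exact subset_rfl
    | succ k ih =>
      rw [hEsucc]
      refine iUnion_subset fun i => ?_
      rintro y ⟨x, hx, rfl⟩
      exact hmaps (ih hx.1)
  have hEmeas : ∀ n, MeasurableSet (E n) := by
    intro n
    induction n with
    | zero => exact hXmeas
    | succ k ih =>
      rw [hEsucc]
      exact MeasurableSet.iUnion fun i => himg i _ (ih.inter measurableSet_interior)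
        (inter_subset_right.trans interior_subset)
  have hmXfin : m X ≤ 1 := by
    rw [hmsub X subset_rfl]
    rcases eq_or_ne (volume X) 0 with h | h
    · simp [h]
    · rw [ENNReal.inv_mul_cancel h hXc.measure_lt_top.ne]
  have hkey : ∀ (n : ℕ) (i j : Fin r), i ≠ j →
      m (E (n+1)) + m (f '' (E n ∩ interior (ω i)) ∩ f '' (E n ∩ interior (ω j)))
        ≤ m (E n) := by
    intro n i j hij
    set B : Fin r → Set (Euc d) := fun k => E n ∩ interior (ω k) with hBdef
    set Cc : Fin r → Set (Euc d) := fun k => f '' B k with hCcdef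
    have hBmeas : ∀ k, MeasurableSet (B k) := fun k => (hEmeas n).inter measurableSet_interior
    have hCcmeas : ∀ k, MeasurableSet (Cc k) := fun k =>
      himg k _ (hBmeas k) (inter_subset_right.trans interior_subset)
    have hCcm : ∀ k, m (Cc k) = m (B k) := fun k => hcov k _ (hBmeas k) inter_subset_right
    have hBdisj : Pairwise (Disjoint on B) := fun a b hab =>
      (hdisj hab).mono (inter_subset_right.trans interior_subset)
        (inter_subset_right.trans interior_subset)
    have hsum : ∑ k, m (B k) ≤ m (E n) := by
      have hsub : (⋃ k, B k) ⊆ E n := iUnion_subset fun k => inter_subset_left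
      calc ∑ k, m (B k) = ∑' k, m (B k) := (tsum_fintype _).symm
        _ = m (⋃ k, B k) := (measure_iUnion hBdisj hBmeas).symm
        _ ≤ m (E n) := measure_mono hsub
    set s : Finset (Fin r) := (Finset.univ.erase i).erase j with hsdef
    have hcup : m (E (n+1)) ≤ m (Cc i ∪ Cc j) + ∑ k ∈ s, m (Cc k) := by
      have hsub : E (n+1) ⊆ (Cc i ∪ Cc j) ∪ ⋃ k ∈ s, Cc k := by
        rw [hEsucc]
        refine iUnion_subset fun k => ?_
        by_cases hk : k = i
        · subst hk; exact subset_union_left.trans subset_union_left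
        by_cases hk' : k = j
        · subst hk'; exact subset_union_right.trans subset_union_left
        · intro x hx
          exact Or.inr (mem_biUnion (Finset.mem_erase.2 ⟨hk', Finset.mem_erase.2 ⟨hk, Finset.mem_univ k⟩⟩) hx)
      calc m (E (n+1)) ≤ m ((Cc i ∪ Cc j) ∪ ⋃ k ∈ s, Cc k) := measure_mono hsub
        _ ≤ m (Cc i ∪ Cc j) + m (⋃ k ∈ s, Cc k) := measure_union_le _ _
        _ ≤ m (Cc i ∪ Cc j) + ∑ k ∈ s, m (Cc k) :=
            add_le_add_right (measure_biUnion_finset_le s Cc) _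
    have hsumsplit : m (Cc i) + (m (Cc j) + ∑ k ∈ s, m (Cc k)) = ∑ k, m (Cc k) := by
      rw [Finset.add_sum_erase _ (fun k => m (Cc k))
          (Finset.mem_erase.2 ⟨hij.symm, Finset.mem_univ j⟩),
        Finset.add_sum_erase _ (fun k => m (Cc k)) (Finset.mem_univ i)]
    calc m (E (n+1)) + m (Cc i ∩ Cc j)
        ≤ (m (Cc i ∪ Cc j) + ∑ k ∈ s, m (Cc k)) + m (Cc i ∩ Cc j) :=
          add_le_add_left hcup _
      _ = (m (Cc i ∪ Cc j) + m (Cc i ∩ Cc j)) + ∑ k ∈ s, m (Cc k) := by ring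
      _ = (m (Cc i) + m (Cc j)) + ∑ k ∈ s, m (Cc k) := by
          rw [measure_union_add_inter _ (hCcmeas j)]
      _ = ∑ k, m (Cc k) := by rw [add_assoc]; exact hsumsplit
      _ = ∑ k, m (B k) := Finset.sum_congr rfl fun k _ => hCcm k
      _ ≤ m (E n) := hsum
  have hZ : ∀ n : ℕ, ∃ Z : Set (Euc d), MeasurableSet Z ∧ m Z = 0 ∧ f^[n] '' X ⊆ E n ∪ Z := by
    intro n
    induction n with
    | zero =>
      refine ⟨∅, MeasurableSet.empty, measure_empty, ?_⟩
      rw [Function.iterate_zero, Set.image_id, union_empty]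
      exact subset_rfl
    | succ k ih =>
      obtain ⟨Z, hZmeas, hZ0, hZsub⟩ := ih
      have h1 : m (f '' Z) = 0 := (hns Z hZmeas hZ0).2
      have h2 : m (f '' F) = 0 := (hns F hFmeas hF0).2
      obtain ⟨Z', hZ'sub, hZ'meas, hZ'0⟩ :=
        exists_measurable_superset_of_null
          (measure_union_null h1 h2 : m (f '' Z ∪ f '' F) = 0)
      refine ⟨Z', hZ'meas, hZ'0, ?_⟩
      rw [hiter k]
      rintro y ⟨x, hx, rfl⟩
      rcases hZsub hx with hxE | hxZ
      · by_cases hxU : x ∈ U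
        · obtain ⟨i, hi⟩ := mem_iUnion.1 hxU
          exact Or.inl (by rw [hEsucc]; exact mem_iUnion.2 ⟨i, mem_image_of_mem f ⟨hxE, hi⟩⟩)
        · have hxF : x ∈ F := hXU ⟨hEX k hxE, hxU⟩
          exact Or.inr (hZ'sub (Or.inr (mem_image_of_mem f hxF)))
      · exact Or.inr (hZ'sub (Or.inl (mem_image_of_mem f hxZ)))
  have hO : ∀ i j : Fin r, i ≠ j →
      m (f '' (interior (ω i) ∩ P) ∩ f '' (interior (ω j) ∩ P)) = 0 := by
    intro i j hij
    set t := m (f '' (interior (ω i) ∩ P) ∩ f '' (interior (ω j) ∩ P)) with htdef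
    have hbound : ∀ n : ℕ, m (E (n+1)) + t ≤ m (E n) := by
      intro n
      obtain ⟨Z, hZmeas, hZ0, hZsub⟩ := hZ n
      have hPE : P ⊆ E n ∪ Z := (iInter_subset _ n).trans hZsub
      have hfZ : m (f '' Z) = 0 := (hns Z hZmeas hZ0).2
      have hsub : f '' (interior (ω i) ∩ P) ∩ f '' (interior (ω j) ∩ P) ⊆
          (f '' (E n ∩ interior (ω i)) ∩ f '' (E n ∩ interior (ω j))) ∪ f '' Z := by
        rintro y ⟨hyi, hyj⟩
        obtain ⟨a, ⟨hai, haP⟩, rfl⟩ := hyi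
        obtain ⟨b, ⟨hbi, hbP⟩, hb⟩ := hyj
        rcases hPE haP with haE | haZ
        · rcases hPE hbP with hbE | hbZ
          · refine Or.inl ⟨mem_image_of_mem f ⟨haE, hai⟩, ?_⟩
            rw [← hb]; exact mem_image_of_mem f ⟨hbE, hbi⟩
          · refine Or.inr ?_
            rw [← hb]; exact mem_image_of_mem f hbZ
        · exact Or.inr (mem_image_of_mem f haZ)
      have ht' : t ≤ m (f '' (E n ∩ interior (ω i)) ∩ f '' (E n ∩ interior (ω j))) := by
        calc t ≤ m ((f '' (E n ∩ interior (ω i)) ∩ f '' (E n ∩ interior (ω j))) ∪ f '' Z) :=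
            measure_mono hsub
          _ ≤ m (f '' (E n ∩ interior (ω i)) ∩ f '' (E n ∩ interior (ω j))) + m (f '' Z) :=
            measure_union_le _ _
          _ = m (f '' (E n ∩ interior (ω i)) ∩ f '' (E n ∩ interior (ω j))) := by
            rw [hfZ, add_zero]
      calc m (E (n+1)) + t
          ≤ m (E (n+1)) + m (f '' (E n ∩ interior (ω i)) ∩ f '' (E n ∩ interior (ω j))) :=
            add_le_add_right ht' _
        _ ≤ m (E n) := hkey n i j hij
    have hlin : ∀ n : ℕ, m (E n) + n * t ≤ m X := by
      intro n
      induction n with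
      | zero => simp [hE0]
      | succ k ih =>
        have hcast : m (E (k+1)) + ((k+1 : ℕ) : ENNReal) * t
            = (m (E (k+1)) + t) + (k : ENNReal) * t := by push_cast; ring
        rw [hcast]
        exact le_trans (add_le_add_left (hbound k) _) ih
    have hnt : ∀ n : ℕ, (n : ENNReal) * t ≤ 1 := fun n =>
      le_trans (le_trans le_add_self (hlin n)) hmXfin
    by_contra ht0
    rcases eq_or_ne t ⊤ with htop | htop
    · have h1 := hnt 1; rw [htop] at h1; simp at h1
    · have hdiv : 1 / t < ⊤ := ENNReal.div_lt_top ENNReal.one_ne_top ht0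
      obtain ⟨n, hn⟩ := ENNReal.exists_nat_gt hdiv.ne
      have hlt : (1 : ENNReal) < n * t := by
        have := (ENNReal.mul_lt_mul_iff_left ht0 htop).2 hn
        rwa [ENNReal.div_mul_cancel ht0 htop] at this
      exact absurd (hnt n) (not_le.2 hlt)
  set O : Set (Euc d) := ⋃ i, ⋃ j, ⋃ (_ : i ≠ j),
    f '' (interior (ω i) ∩ P) ∩ f '' (interior (ω j) ∩ P) with hOdef
  have hO0 : m O = 0 :=
    measure_iUnion_null fun i => measure_iUnion_null fun j =>
      measure_iUnion_null fun hij => hO i j hij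
  obtain ⟨Ob, hObsub, hObmeas, hOb0⟩ := exists_measurable_superset_of_null hO0
  set N : Set (Euc d) := (F ∪ f ⁻¹' Ob) ∩ C with hNdef
  have hN0 : m N = 0 := by
    have h1 : m (f ⁻¹' Ob) = 0 := (hns Ob hObmeas hOb0).1
    exact measure_mono_null inter_subset_left (measure_union_null hF0 h1)
  refine ⟨fun x => if x ∈ S then f x else x, ?_, ?_, ?_, N, inter_subset_right, hN0, ?_⟩
  · intro x hx
    by_cases hxS : x ∈ S
    · simp only [if_pos hxS]
      exact subset_closure (hfP hxS.2)
    · simpa only [if_neg hxS] using hx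
  · intro i x hx
    have hxS : x ∈ S := ⟨mem_iUnion.2 ⟨i, hx.1⟩, hx.2⟩
    simp only [if_pos hxS]
  · intro A hAC hAmeas hA0
    have hpre : m (f ⁻¹' A) = 0 := (hns A hAmeas hA0).1
    have him : m (f '' A) = 0 := (hns A hAmeas hA0).2
    constructor
    · refine measure_mono_null ?_ (measure_union_null hpre hA0)
      intro x hx
      have h1 : (if x ∈ S then f x else x) ∈ A := hx.1
      by_cases hxS : x ∈ S
      · left; rwa [if_pos hxS] at h1
      · right; rwa [if_neg hxS] at h1
    · refine measure_mono_null ?_ (measure_union_null him hA0)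
      rintro y ⟨x, hxA, rfl⟩
      by_cases hxS : x ∈ S
      · left; simp only [if_pos hxS]; exact mem_image_of_mem f hxA
      · right; simp only [if_neg hxS]; exact hxA
  · rintro x ⟨hxC, hxN⟩ y ⟨hyC, hyN⟩ hxy
    by_cases hxS : x ∈ S <;> by_cases hyS : y ∈ S
    · simp only [if_pos hxS, if_pos hyS] at hxy
      obtain ⟨i, hxi⟩ := mem_iUnion.1 hxS.1
      obtain ⟨j, hyj⟩ := mem_iUnion.1 hyS.1
      rcases eq_or_ne i j with rfl | hij
      · exact hinj i (interior_subset hxi) (interior_subset hyj) hxy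
      · exfalso
        apply hxN
        refine ⟨Or.inr ?_, hxC⟩
        apply hObsub
        refine mem_iUnion.2 ⟨i, mem_iUnion.2 ⟨j, mem_iUnion.2 ⟨hij, ?_⟩⟩⟩
        refine ⟨mem_image_of_mem f ⟨hxi, hxS.2⟩, ?_⟩
        rw [hxy]; exact mem_image_of_mem f ⟨hyj, hyS.2⟩
    · simp only [if_pos hxS, if_neg hyS] at hxy
      exfalso
      apply hyN
      refine ⟨Or.inl ?_, hyC⟩
      have hyP : y ∈ P := by rw [← hxy]; exact hfP hxS.2
      have hyU : y ∉ U := fun h => hyS ⟨h, hyP⟩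
      exact hXU ⟨hPX hyP, hyU⟩
    · simp only [if_neg hxS, if_pos hyS] at hxy
      exfalso
      apply hxN
      refine ⟨Or.inl ?_, hxC⟩
      have hxP : x ∈ P := by rw [hxy]; exact hfP hyS.2
      have hxU : x ∉ U := fun h => hxS ⟨h, hxP⟩
      exact hXU ⟨hPX hxP, hxU⟩
    · simp only [if_neg hxS, if_neg hyS] at hxy
      exact hxy
end
end
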